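/- Let F = g + h∘c with g proper closed convex, h convex L-Lipschitz, c C¹ with β-Lipschitz Jacobian, and set μ = Lβ. For t > 0 define S_t(x) = argmin_z { g(z) + h(c(x)+∇c(x)(z−x)) + ‖z−x‖²/(2t) } and G_t(x) = t⁻¹(x − S_t(x)). Then for every x, ‖∇F_{t/(1+tμ)}(x)‖ ≤ (1+μt)(1+√(μt)) ‖G_t(x)‖, where F_ν denotes the Moreau envelope of F with parameter ν. -/

import Mathlib

/-!
Write `μ = Lβ` and `ν = t / (1 + tμ)`, so that `ν⁻¹ = t⁻¹ + μ`. The Taylor bound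
`‖c z - c x - ∇c(x)(z - x)‖ ≤ β/2 ‖z - x‖²` sandwiches the proximal objective
`Ψ = F + ‖· - x‖² / (2ν)` of the Moreau envelope between the prox-linear model `m` and
`m + μ ‖· - x‖²`, and it makes `h ∘ c` `μ`-weakly convex, so that `Ψ` and `m` are both
`t⁻¹`-strongly convex. Comparing the quadratic growth of both around their minimizers, the
proximal point `p` and `S_t x`, gives `‖S_t x - p‖² ≤ μt ‖x - S_t x‖²`. Finally
`∇F_ν(x) = ν⁻¹ (x - p)`, because `F_ν ≤ F_ν(x) + ⟪ν⁻¹ (x - p), · - x⟫ + ‖· - x‖² / (2ν)`, and the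
triangle inequality through `S_t x` gives the bound.
-/

open Set Filter Topology RealInnerProductSpace

section Linearization

variable {E F : Type*} [NormedAddCommGroup E] [NormedSpace ℝ E] [NormedAddCommGroup F]
  [NormedSpace ℝ F] {c : E → F} {β : ℝ}

theorem norm_sub_sub_fderiv_le_of_lipschitz_fderiv (hc : Differentiable ℝ c)
    (hcβ : ∀ x y, ‖fderiv ℝ c x - fderiv ℝ c y‖ ≤ β * ‖x - y‖) (x z : E) :
    ‖c z - c x - fderiv ℝ c x (z - x)‖ ≤ β / 2 * ‖z - x‖ ^ 2 := by
  set v := z - x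
  let φ : ℝ → F := fun s => c (x + s • v) - c x - s • fderiv ℝ c x v
  have hφ : ∀ s, HasDerivAt φ (fderiv ℝ c (x + s • v) v - fderiv ℝ c x v) s := by
    intro s
    have hline : HasDerivAt (fun s : ℝ => x + s • v) v s := by
      simpa using ((hasDerivAt_id s).smul_const v).const_add x
    simpa using (((hc _).hasFDerivAt.comp_hasDerivAt s hline).sub_const (c x)).fun_sub
      ((hasDerivAt_id s).smul_const (fderiv ℝ c x v))
  have hφ_le : ∀ s ∈ Ico (0 : ℝ) 1,
      ‖fderiv ℝ c (x + s • v) v - fderiv ℝ c x v‖ ≤ β * ‖v‖ ^ 2 * s := by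
    intro s hs
    calc ‖fderiv ℝ c (x + s • v) v - fderiv ℝ c x v‖
        ≤ ‖fderiv ℝ c (x + s • v) - fderiv ℝ c x‖ * ‖v‖ :=
          (fderiv ℝ c (x + s • v) - fderiv ℝ c x).le_opNorm v
      _ ≤ β * ‖s • v‖ * ‖v‖ := by
          gcongr
          simpa using hcβ (x + s • v) x
      _ = β * ‖v‖ ^ 2 * s := by rw [norm_smul, Real.norm_of_nonneg hs.1]; ring
  have hB : ∀ s : ℝ, HasDerivAt (fun s => β * ‖v‖ ^ 2 / 2 * s ^ 2) (β * ‖v‖ ^ 2 * s) s := by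
    intro s
    simpa [mul_assoc] using ((hasDerivAt_pow 2 s).const_mul (β * ‖v‖ ^ 2 / 2)).congr_deriv
      (by ring)
  have := image_norm_le_of_norm_deriv_right_le_deriv_boundary
    (fun s _ => (hφ s).continuousAt.continuousWithinAt) (fun s _ => (hφ s).hasDerivWithinAt)
    (by simp [φ]) hB hφ_le (right_mem_Icc.2 zero_le_one)
  simp only [φ, v, one_smul, one_pow, mul_one, add_sub_cancel] at this
  linarith

theorem norm_smul_add_smul_sub_image_le (hc : Differentiable ℝ c)
    (hcβ : ∀ x y, ‖fderiv ℝ c x - fderiv ℝ c y‖ ≤ β * ‖x - y‖)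
    {a b : ℝ} (ha : 0 ≤ a) (hb : 0 ≤ b) (hab : a + b = 1) (u v : E) :
    ‖a • c u + b • c v - c (a • u + b • v)‖ ≤ β / 2 * (a * b) * ‖u - v‖ ^ 2 := by
  set p := a • u + b • v
  set D := fderiv ℝ c p
  have hup : u - p = b • (u - v) := by
    simp only [p]; match_scalars <;> linarith
  have hvp : v - p = (-a) • (u - v) := by
    simp only [p]; match_scalars <;> linarith
  have hsplit : a • c u + b • c v - c p
      = a • (c u - c p - D (u - p)) + b • (c v - c p - D (v - p)) := by
    have hD : a • D (u - p) + b • D (v - p) = 0 := by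
      rw [hup, hvp, map_smul, map_smul, smul_smul, smul_smul, ← add_smul]
      simp [mul_comm]
    linear_combination (norm := module) hD + hab • c p
  calc ‖a • c u + b • c v - c p‖
      ≤ a * ‖c u - c p - D (u - p)‖ + b * ‖c v - c p - D (v - p)‖ := by
        rw [hsplit]
        refine (norm_add_le _ _).trans_eq ?_
        rw [norm_smul, norm_smul, Real.norm_of_nonneg ha, Real.norm_of_nonneg hb]
    _ ≤ a * (β / 2 * ‖u - p‖ ^ 2) + b * (β / 2 * ‖v - p‖ ^ 2) := by
        gcongr
        · exact norm_sub_sub_fderiv_le_of_lipschitz_fderiv hc hcβ p u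
        · exact norm_sub_sub_fderiv_le_of_lipschitz_fderiv hc hcβ p v
    _ = β / 2 * (a * b) * ‖u - v‖ ^ 2 := by
        rw [hup, hvp, norm_smul, norm_smul, mul_pow, mul_pow, Real.norm_eq_abs,
          Real.norm_eq_abs, sq_abs, sq_abs]
        linear_combination (β / 2 * a * b * ‖u - v‖ ^ 2) * hab

end Linearization

section StrongConvexity

variable {E : Type*} [NormedAddCommGroup E]

theorem StrongConvexOn.add [NormedSpace ℝ E] {s : Set E} {f g : E → ℝ} {m n : ℝ}
    (hf : StrongConvexOn s m f) (hg : StrongConvexOn s n g) :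
    StrongConvexOn s (m + n) (f + g) :=
  (UniformConvexOn.add hf hg).mono fun r => by simp only [Pi.add_apply]; linarith

theorem StrongConvexOn.add_sq_norm_sub_le_of_isMinOn [NormedSpace ℝ E] {s : Set E} {f : E → ℝ}
    {m : ℝ} {p z : E} (hf : StrongConvexOn s m f) (hp : IsMinOn f s p) (hps : p ∈ s)
    (hz : z ∈ s) : f p + m / 2 * ‖z - p‖ ^ 2 ≤ f z := by
  set K := m / 2 * ‖z - p‖ ^ 2
  have hθ : ∀ θ ∈ Ioo (0 : ℝ) 1, f p + K ≤ f z + θ * K := by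
    rintro θ ⟨hθ0, hθ1⟩
    have hmem : θ • z + (1 - θ) • p ∈ s := hf.1 hz hps hθ0.le (by linarith) (by ring)
    have hcomb : f (θ • z + (1 - θ) • p) ≤ θ * f z + (1 - θ) * f p - θ * (1 - θ) * K :=
      hf.2 hz hps hθ0.le (by linarith) (add_sub_cancel θ 1)
    have hmin : f p ≤ f (θ • z + (1 - θ) • p) := hp hmem
    have : θ * (f p + K) ≤ θ * (f z + θ * K) := by linarith
    exact le_of_mul_le_mul_left this hθ0
  have hlim : Tendsto (fun θ : ℝ => f z + θ * K) (𝓝[>] 0) (𝓝 (f z)) := by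
    refine tendsto_nhdsWithin_of_tendsto_nhds ?_
    simpa using (tendsto_const_nhds (x := f z)).add ((tendsto_id (x := 𝓝 (0 : ℝ))).mul_const K)
  exact ge_of_tendsto hlim (eventually_of_mem (Ioo_mem_nhdsGT zero_lt_one) hθ)

theorem mul_sq_norm_sub_le_of_quadratic_growth {f g : E → ℝ} {m ε : ℝ} {p q : E}
    (hf : ∀ z, f p + m / 2 * ‖z - p‖ ^ 2 ≤ f z) (hg : ∀ z, g q + m / 2 * ‖z - q‖ ^ 2 ≤ g z)
    (hfg : ∀ z, f z ≤ g z) (hgp : g p ≤ f p + ε) : m * ‖p - q‖ ^ 2 ≤ ε := by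
  have hfq := hf q
  have hgp' := hg p
  have := hfg q
  rw [norm_sub_rev q p] at hfq
  linarith

theorem strongConvexOn_univ_sq_norm_sub_div [InnerProductSpace ℝ E] (x : E) (ν : ℝ) :
    StrongConvexOn univ ν⁻¹ fun z => ‖z - x‖ ^ 2 / (2 * ν) := by
  rw [strongConvexOn_iff_convex]
  have hquad : (fun z => ‖z - x‖ ^ 2 / (2 * ν) - ν⁻¹ / 2 * ‖z‖ ^ 2)
      = fun z => (-ν⁻¹ • innerₛₗ ℝ x) z + ‖x‖ ^ 2 / (2 * ν) := by
    ext z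
    simp only [norm_sub_sq_real, real_inner_comm, neg_smul, LinearMap.neg_apply,
      LinearMap.smul_apply, innerₛₗ_apply_apply, smul_eq_mul]
    ring
  rw [hquad]
  exact ((-ν⁻¹ • innerₛₗ ℝ x).convexOn convex_univ).add_const _

end StrongConvexity

theorem LowerSemicontinuous.exists_forall_le_of_isBounded {β γ : Type*} [PseudoMetricSpace β]
    [ProperSpace β] [LinearOrder γ] [TopologicalSpace γ] {f : β → γ}
    (hf : LowerSemicontinuous f) (x₀ : β) (h : Bornology.IsBounded {x | f x ≤ f x₀}) :
    ∃ x, ∀ y, f x ≤ f y := by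
  obtain ⟨x, -, hmin⟩ := (hf.lowerSemicontinuousOn {x | f x ≤ f x₀}).exists_isMinOn
    ⟨x₀, le_refl (f x₀)⟩ (Metric.isCompact_of_isClosed_isBounded (hf.isClosed_preimage (f x₀)) h)
  rw [isMinOn_iff] at hmin
  exact ⟨x, fun y => (le_total (f y) (f x₀)).elim (hmin y) ((hmin x₀ le_rfl).trans)⟩

theorem LowerSemicontinuous.exists_forall_le_of_sq_growth {E : Type*} [NormedAddCommGroup E]
    [ProperSpace E] {f : E → ℝ} (hf : LowerSemicontinuous f) {a k : ℝ} {p : E} (hk : 0 < k)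
    (hgrowth : ∀ z, a + k * ‖z - p‖ ^ 2 ≤ f z) : ∃ x, ∀ y, f x ≤ f y := by
  refine hf.exists_forall_le_of_isBounded p
    ((Metric.isBounded_closedBall (x := p) (r := √((f p - a) / k))).subset fun z hz => ?_)
  rw [mem_closedBall_iff_norm, ← abs_norm]
  refine Real.abs_le_sqrt ?_
  rw [le_div_iff₀ hk]
  linarith [hgrowth z, show f z ≤ f p from hz]

section MoreauEnvelope

variable {E : Type*} [NormedAddCommGroup E]

-- An infimum that is not bounded below is `0` in `ℝ`, hence the `BddBelow` bookkeeping below.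
noncomputable def moreauEnvelope (f : E → ℝ) (ν : ℝ) (x : E) : ℝ :=
  ⨅ z, f z + ‖z - x‖ ^ 2 / (2 * ν)

theorem moreauEnvelope_eq_of_forall_le {f : E → ℝ} {ν : ℝ} {x p : E}
    (hp : ∀ z, f p + ‖p - x‖ ^ 2 / (2 * ν) ≤ f z + ‖z - x‖ ^ 2 / (2 * ν)) :
    moreauEnvelope f ν x = f p + ‖p - x‖ ^ 2 / (2 * ν) :=
  le_antisymm (ciInf_le ⟨_, forall_mem_range.2 hp⟩ p) (le_ciInf hp)

variable [InnerProductSpace ℝ E]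

theorem HasGradientAt.eq_of_forall_le_add_inner_add_sq [CompleteSpace E] {φ : E → ℝ}
    {x v w : E} {K : ℝ} (hφ : HasGradientAt φ v x)
    (hle : ∀ y, φ y ≤ φ x + ⟪w, y - x⟫ + K * ‖y - x‖ ^ 2) :
    v = w := by
  have hmax : IsLocalMax (fun y => φ y - ⟪w, y - x⟫ - K * ‖y - x‖ ^ 2) x :=
    Eventually.of_forall fun y => by
      simp only [sub_self, inner_zero_right, norm_zero]
      linarith [hle y]
  have hderiv := hmax.hasFDerivAt_eq_zero ((hφ.hasFDerivAt.sub
    ((innerSL ℝ w).hasFDerivAt.comp x ((hasFDerivAt_id x).sub_const x))).sub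
    (((hasFDerivAt_id x).sub_const x).norm_sq.const_mul K))
  have := congrArg (fun D => D (v - w)) hderiv
  simp only [ContinuousLinearMap.comp_id, id_eq, sub_self, map_zero, smul_zero,
    sub_zero, sub_apply, InnerProductSpace.toDual_apply_apply,
    coe_innerSL_apply, zero_apply] at this
  rw [← sub_eq_zero, ← inner_self_eq_zero (𝕜 := ℝ), inner_sub_left]
  linarith

theorem bddBelow_range_add_sq_norm_sub_div {f : E → ℝ} {ν k a : ℝ} {x p : E} (hν : 0 < ν)
    (hk : 0 < k) (hgrowth : ∀ z, a + k * ‖z - p‖ ^ 2 ≤ f z + ‖z - x‖ ^ 2 / (2 * ν)) (y : E) :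
    BddBelow (range fun z => f z + ‖z - y‖ ^ 2 / (2 * ν)) := by
  refine ⟨a + (‖p - y‖ ^ 2 - ‖p - x‖ ^ 2) / (2 * ν) - ‖x - y‖ ^ 2 / (4 * k * ν ^ 2),
    forall_mem_range.2 fun z => ?_⟩
  have hshift : ‖z - y‖ ^ 2 - ‖z - x‖ ^ 2 = 2 * ⟪z - p, x - y⟫ + ‖p - y‖ ^ 2 - ‖p - x‖ ^ 2 := by
    rw [← sub_add_sub_cancel z p y, ← sub_add_sub_cancel z p x, norm_add_sq_real,
      norm_add_sq_real, show x - y = (p - y) - (p - x) by abel,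
      inner_sub_right (z - p) (p - y) (p - x)]
    ring
  have hcs : -(‖z - p‖ * ‖x - y‖) ≤ ⟪z - p, x - y⟫ := neg_le_of_abs_le (abs_real_inner_le_norm _ _)
  have hsq : k * ‖z - p‖ ^ 2 + ⟪z - p, x - y⟫ / ν + ‖x - y‖ ^ 2 / (4 * k * ν ^ 2)
      = (2 * k * ν * ‖z - p‖ - ‖x - y‖) ^ 2 / (4 * k * ν ^ 2)
        + (⟪z - p, x - y⟫ + ‖z - p‖ * ‖x - y‖) / ν := by
    field_simp
    ring
  have hnonneg : 0 ≤ k * ‖z - p‖ ^ 2 + ⟪z - p, x - y⟫ / ν + ‖x - y‖ ^ 2 / (4 * k * ν ^ 2) := by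
    rw [hsq]
    exact add_nonneg (by positivity) (div_nonneg (by linarith) hν.le)
  have hy : ‖z - y‖ ^ 2 / (2 * ν)
      = ‖z - x‖ ^ 2 / (2 * ν) + ⟪z - p, x - y⟫ / ν + (‖p - y‖ ^ 2 - ‖p - x‖ ^ 2) / (2 * ν) := by
    field_simp
    linear_combination hshift
  have := hgrowth z
  linarith

theorem eq_inv_smul_sub_of_hasGradientAt_moreauEnvelope [CompleteSpace E] {f : E → ℝ}
    {ν k : ℝ} {x p v : E} (hν : 0 < ν) (hk : 0 < k)
    (hgrowth : ∀ z, f p + ‖p - x‖ ^ 2 / (2 * ν) + k * ‖z - p‖ ^ 2 ≤ f z + ‖z - x‖ ^ 2 / (2 * ν))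
    (hv : HasGradientAt (moreauEnvelope f ν) v x) : v = ν⁻¹ • (x - p) := by
  have hx : moreauEnvelope f ν x = f p + ‖p - x‖ ^ 2 / (2 * ν) :=
    moreauEnvelope_eq_of_forall_le fun z =>
      (le_add_of_nonneg_right (by positivity)).trans (hgrowth z)
  refine hv.eq_of_forall_le_add_inner_add_sq (K := (2 * ν)⁻¹) fun y => ?_
  have hexpand : ‖p - y‖ ^ 2 = ‖p - x‖ ^ 2 + 2 * ⟪x - p, y - x⟫ + ‖y - x‖ ^ 2 := by
    rw [← sub_sub_sub_cancel_right p y x, norm_sub_sq_real, ← neg_sub x p, inner_neg_left]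
    ring
  calc moreauEnvelope f ν y ≤ f p + ‖p - y‖ ^ 2 / (2 * ν) :=
        ciInf_le (bddBelow_range_add_sq_norm_sub_div hν hk hgrowth y) p
    _ = moreauEnvelope f ν x + ⟪ν⁻¹ • (x - p), y - x⟫ + (2 * ν)⁻¹ * ‖y - x‖ ^ 2 := by
        rw [hx, real_inner_smul_left, hexpand]
        field_simp
        ring

end MoreauEnvelope

section ProxLinear

variable {E F : Type*} [NormedAddCommGroup E] [InnerProductSpace ℝ E] [NormedAddCommGroup F]
  [NormedSpace ℝ F] {g : E → ℝ} {h : F → ℝ} {c : E → F} {L β t : ℝ}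

noncomputable def proxLinearModel (g : E → ℝ) (h : F → ℝ) (c : E → F) (t : ℝ) (x z : E) : ℝ :=
  g z + h (c x + fderiv ℝ c x (z - x)) + ‖z - x‖ ^ 2 / (2 * t)

theorem ConvexOn.comp_add_apply_sub (hh : ConvexOn ℝ univ h) (y : F) (A : E →L[ℝ] F) (x : E) :
    ConvexOn ℝ univ fun z => h (y + A (z - x)) := by
  refine ⟨convex_univ, fun u _ v _ a b ha hb hab => ?_⟩
  have haff : y + A (a • u + b • v - x) = a • (y + A (u - x)) + b • (y + A (v - x)) := by
    simp only [map_sub, map_add, map_smul]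
    linear_combination (norm := module) (-hab) • (y - A x)
  simp only [haff]
  exact hh.2 (mem_univ _) (mem_univ _) ha hb hab

theorem strongConvexOn_proxLinearModel (hg : ConvexOn ℝ univ g) (hh : ConvexOn ℝ univ h)
    (t : ℝ) (x : E) : StrongConvexOn univ t⁻¹ (proxLinearModel g h c t x) := by
  have := ((strongConvexOn_zero.2 hg).add (strongConvexOn_zero.2
    (hh.comp_add_apply_sub (c x) (fderiv ℝ c x) x))).add (strongConvexOn_univ_sq_norm_sub_div x t)
  rwa [zero_add, zero_add] at this

-- Weak convexity of `h ∘ c` is encoded as strong convexity with the negative modulus `-(Lβ)`.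
theorem ConvexOn.strongConvexOn_neg_comp (hh : ConvexOn ℝ univ h) (hL : 0 ≤ L)
    (hhL : ∀ u v, |h u - h v| ≤ L * ‖u - v‖) (hc : Differentiable ℝ c)
    (hcβ : ∀ x y, ‖fderiv ℝ c x - fderiv ℝ c y‖ ≤ β * ‖x - y‖) :
    StrongConvexOn univ (-(L * β)) fun z => h (c z) := by
  refine ⟨convex_univ, fun u _ v _ a b ha hb hab => ?_⟩
  have hLip := (abs_le.1 (hhL (c (a • u + b • v)) (a • c u + b • c v))).2
  have hconv : h (a • c u + b • c v) ≤ a * h (c u) + b * h (c v) :=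
    hh.2 (mem_univ _) (mem_univ _) ha hb hab
  have hcomb := mul_le_mul_of_nonneg_left (norm_smul_add_smul_sub_image_le hc hcβ ha hb hab u v) hL
  rw [norm_sub_rev] at hcomb
  simp only [smul_eq_mul]
  linarith

theorem abs_comp_sub_comp_linearization_le (hL : 0 ≤ L)
    (hhL : ∀ u v, |h u - h v| ≤ L * ‖u - v‖) (hc : Differentiable ℝ c)
    (hcβ : ∀ x y, ‖fderiv ℝ c x - fderiv ℝ c y‖ ≤ β * ‖x - y‖) (x z : E) :
    |h (c z) - h (c x + fderiv ℝ c x (z - x))| ≤ L * β / 2 * ‖z - x‖ ^ 2 :=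
  calc _ ≤ L * ‖c z - (c x + fderiv ℝ c x (z - x))‖ := hhL _ _
    _ ≤ L * (β / 2 * ‖z - x‖ ^ 2) := by
        rw [← sub_sub]
        exact mul_le_mul_of_nonneg_left (norm_sub_sub_fderiv_le_of_lipschitz_fderiv hc hcβ x z) hL
    _ = L * β / 2 * ‖z - x‖ ^ 2 := by ring

theorem div_two_mul_div_one_add (r μ : ℝ) (ht : t ≠ 0) :
    r / (2 * (t / (1 + t * μ))) = r / (2 * t) + μ / 2 * r := by
  rw [mul_div_assoc', div_div_eq_mul_div]
  field_simp

theorem proxLinearModel_le (hL : 0 ≤ L) (hhL : ∀ u v, |h u - h v| ≤ L * ‖u - v‖)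
    (hc : Differentiable ℝ c) (hcβ : ∀ x y, ‖fderiv ℝ c x - fderiv ℝ c y‖ ≤ β * ‖x - y‖)
    (ht : t ≠ 0) (x z : E) :
    proxLinearModel g h c t x z ≤ g z + h (c z) + ‖z - x‖ ^ 2 / (2 * (t / (1 + t * (L * β)))) := by
  have := (abs_le.1 (abs_comp_sub_comp_linearization_le hL hhL hc hcβ x z)).1
  rw [proxLinearModel, div_two_mul_div_one_add _ _ ht]
  linarith

theorem le_proxLinearModel_add (hL : 0 ≤ L) (hhL : ∀ u v, |h u - h v| ≤ L * ‖u - v‖)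
    (hc : Differentiable ℝ c) (hcβ : ∀ x y, ‖fderiv ℝ c x - fderiv ℝ c y‖ ≤ β * ‖x - y‖)
    (ht : t ≠ 0) (x z : E) :
    g z + h (c z) + ‖z - x‖ ^ 2 / (2 * (t / (1 + t * (L * β))))
      ≤ proxLinearModel g h c t x z + L * β * ‖z - x‖ ^ 2 := by
  have := (abs_le.1 (abs_comp_sub_comp_linearization_le hL hhL hc hcβ x z)).2
  rw [proxLinearModel, div_two_mul_div_one_add _ _ ht]
  linarith

theorem strongConvexOn_add_comp_add_sq_norm_sub_div (hg : ConvexOn ℝ univ g)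
    (hh : ConvexOn ℝ univ h) (hL : 0 ≤ L) (hhL : ∀ u v, |h u - h v| ≤ L * ‖u - v‖)
    (hc : Differentiable ℝ c) (hcβ : ∀ x y, ‖fderiv ℝ c x - fderiv ℝ c y‖ ≤ β * ‖x - y‖)
    (ht : t ≠ 0) (x : E) :
    StrongConvexOn univ t⁻¹
      fun z => g z + h (c z) + ‖z - x‖ ^ 2 / (2 * (t / (1 + t * (L * β)))) := by
  have := ((strongConvexOn_zero.2 hg).add (hh.strongConvexOn_neg_comp hL hhL hc hcβ)).add
    (strongConvexOn_univ_sq_norm_sub_div x (t / (1 + t * (L * β))))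
  rwa [inv_div, show 0 + -(L * β) + (1 + t * (L * β)) / t = t⁻¹ by field_simp; ring] at this

theorem exists_forall_le_add_comp_add_sq_norm_sub_div [ProperSpace E] (hgc : LowerSemicontinuous g)
    (hL : 0 ≤ L) (hhL : ∀ u v, |h u - h v| ≤ L * ‖u - v‖) (hc : Differentiable ℝ c)
    (hcβ : ∀ x y, ‖fderiv ℝ c x - fderiv ℝ c y‖ ≤ β * ‖x - y‖) (ht : 0 < t) {x s : E}
    (hs : ∀ z, proxLinearModel g h c t x s + t⁻¹ / 2 * ‖z - s‖ ^ 2 ≤ proxLinearModel g h c t x z) :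
    ∃ p, ∀ z, g p + h (c p) + ‖p - x‖ ^ 2 / (2 * (t / (1 + t * (L * β))))
      ≤ g z + h (c z) + ‖z - x‖ ^ 2 / (2 * (t / (1 + t * (L * β)))) := by
  have hh_cont : Continuous h := (LipschitzWith.of_dist_le_mul (K := ⟨L, hL⟩) fun u v => by
    rw [Real.dist_eq, dist_eq_norm]; exact hhL u v).continuous
  have hq : Continuous fun z => ‖z - x‖ ^ 2 / (2 * (t / (1 + t * (L * β)))) := by fun_prop
  have hlsc := (hgc.add (hh_cont.comp hc.continuous).lowerSemicontinuous).add
    hq.lowerSemicontinuous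
  exact hlsc.exists_forall_le_of_sq_growth (by positivity : 0 < t⁻¹ / 2)
    fun z => (hs z).trans (proxLinearModel_le hL hhL hc hcβ ht.ne' x z)

end ProxLinear

/-- Prox-gradient versus the gradient of the Moreau envelope (first inequality of
Theorem 4.5): for the composite function `F = g + h ∘ c` with `μ = Lβ`, the prox-linear map
`S_t` and prox-gradient `G_t(x) = t⁻¹ (x - S_t x)` satisfy
`‖∇F_{t/(1+tμ)}(x)‖ ≤ (1 + μt)(1 + √(μt)) ‖G_t(x)‖`. -/
theorem envelope_gradient_le_prox_gradient {d m : ℕ}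
    (g : EuclideanSpace ℝ (Fin d) → ℝ)
    (h : EuclideanSpace ℝ (Fin m) → ℝ)
    (c : EuclideanSpace ℝ (Fin d) → EuclideanSpace ℝ (Fin m))
    (L β t : ℝ) (hL : 0 ≤ L) (hβ : 0 ≤ β) (ht : 0 < t)
    (hg : ConvexOn ℝ Set.univ g) (hgc : LowerSemicontinuous g)
    (hh : ConvexOn ℝ Set.univ h)
    (hhL : ∀ u v, |h u - h v| ≤ L * ‖u - v‖)
    (hc : ContDiff ℝ 1 c)
    (hcβ : ∀ x y, ‖fderiv ℝ c x - fderiv ℝ c y‖ ≤ β * ‖x - y‖)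
    (S : EuclideanSpace ℝ (Fin d) → EuclideanSpace ℝ (Fin d))
    (hS : ∀ y z, g (S y) + h (c y + fderiv ℝ c y (S y - y)) + ‖S y - y‖ ^ 2 / (2 * t) ≤
        g z + h (c y + fderiv ℝ c y (z - y)) + ‖z - y‖ ^ 2 / (2 * t))
    (Fgrad : EuclideanSpace ℝ (Fin d) → EuclideanSpace ℝ (Fin d))
    (hgrad : ∀ w, HasGradientAt
        (fun w' => ⨅ z, (g z + h (c z) + ‖z - w'‖ ^ 2 / (2 * (t / (1 + t * (L * β))))))
        (Fgrad w) w)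
    (x : EuclideanSpace ℝ (Fin d)) :
    ‖Fgrad x‖ ≤ (1 + (L * β) * t) * (1 + Real.sqrt ((L * β) * t)) * ‖t⁻¹ • (x - S x)‖ := by
  have hcd : Differentiable ℝ c := hc.differentiable one_ne_zero
  set ν := t / (1 + t * (L * β))
  have hmodel := fun z => (strongConvexOn_proxLinearModel (c := c) hg hh t x)
    |>.add_sq_norm_sub_le_of_isMinOn (isMinOn_univ_iff.2 (hS x)) (mem_univ _) (mem_univ z)
  obtain ⟨p, hp⟩ := exists_forall_le_add_comp_add_sq_norm_sub_div hgc hL hhL hcd hcβ ht hmodel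
  have hΨ := fun z => (strongConvexOn_add_comp_add_sq_norm_sub_div hg hh hL hhL hcd hcβ ht.ne' x)
    |>.add_sq_norm_sub_le_of_isMinOn (isMinOn_univ_iff.2 hp) (mem_univ _) (mem_univ z)
  have hdist : t⁻¹ * ‖S x - p‖ ^ 2 ≤ L * β * ‖S x - x‖ ^ 2 :=
    mul_sq_norm_sub_le_of_quadratic_growth hmodel hΨ (proxLinearModel_le hL hhL hcd hcβ ht.ne' x)
      (le_proxLinearModel_add hL hhL hcd hcβ ht.ne' x (S x))
  have hFgrad : Fgrad x = ν⁻¹ • (x - p) :=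
    eq_inv_smul_sub_of_hasGradientAt_moreauEnvelope (f := fun z => g z + h (c z))
      (by positivity) (by positivity : 0 < t⁻¹ / 2) hΨ (hgrad x)
  have hSp : ‖S x - p‖ ≤ √(L * β * t) * ‖x - S x‖ := by
    rw [← Real.sqrt_sq (norm_nonneg (S x - p)), ← Real.sqrt_sq (norm_nonneg (x - S x)),
      ← Real.sqrt_mul (by positivity)]
    refine Real.sqrt_le_sqrt ?_
    rw [inv_mul_le_iff₀ ht, norm_sub_rev (S x) x] at hdist
    linarith
  calc ‖Fgrad x‖ = ν⁻¹ * ‖x - p‖ := by rw [hFgrad, norm_smul, Real.norm_of_nonneg (by positivity)]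
    _ ≤ ν⁻¹ * (‖x - S x‖ + √(L * β * t) * ‖x - S x‖) := by
        gcongr
        exact (norm_sub_le_norm_sub_add_norm_sub x (S x) p).trans (by linarith)
    _ = (1 + L * β * t) * (1 + √(L * β * t)) * ‖t⁻¹ • (x - S x)‖ := by
        rw [norm_smul, Real.norm_of_nonneg (by positivity), inv_div]
        field_simp
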